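/- arXiv:2306.09016 — 2 statements merged into one kernel-verified Lean document; each statement's English description precedes it below -/
import Mathlib

section
/- Let H be a graph, let G ⊆ H be a connected subgraph with at least one vertex v satisfying d_H(v) ≥ 3, let r ∈ ℕ, and let G^× be the graph constructed from G, H and r as defined. Then for every edge set X ⊆ E(G^×) of size at most r−1, the graph G^× − X contains G as a minor. -/
open SimpleGraph

/-- `B` is a minor model (family of branch sets) of `H` in `G`. -/
def IsModel {V W : Type} (H : SimpleGraph V) (G : SimpleGraph W)
    (B : V → Set W) : Prop :=
  (∀ v, (B v).Nonempty) ∧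
  (∀ v, (G.induce (B v)).Connected) ∧
  (Pairwise fun u v => Disjoint (B u) (B v)) ∧
  (∀ u v, H.Adj u v → ∃ a ∈ B u, ∃ b ∈ B v, G.Adj a b)

/-- `H` is a minor of `G`. -/
def IsMinor {V W : Type} (H : SimpleGraph V) (G : SimpleGraph W) : Prop :=
  ∃ B : V → Set W, IsModel H G B

/-- `G` contains `k` pairwise edge-disjoint `H`-expansions (subgraphs containing `H`
as a minor). -/
def EdgeDisjointExpansions {VH : Type} (H : SimpleGraph VH) {V : Type}
    (G : SimpleGraph V) (k : ℕ) : Prop :=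
  ∃ M : Fin k → G.Subgraph,
    (Pairwise fun i j => Disjoint (M i).edgeSet (M j).edgeSet) ∧
    ∀ i, IsMinor H (M i).coe

/-- The class of `H`-expansions has the edge-Erdős–Pósa property: there is `f : ℕ → ℝ`
such that every (finite) graph `G` either contains `k` edge-disjoint `H`-expansions or
an edge set `X` with `|X| ≤ f k` meeting every `H`-expansion in `G` (equivalently,
`G - X` has no `H`-minor). -/
def EdgeEP {VH : Type} (H : SimpleGraph VH) : Prop :=
  ∃ f : ℕ → ℝ, ∀ (V : Type) (_ : Fintype V) (G : SimpleGraph V) (k : ℕ),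
    EdgeDisjointExpansions H G k ∨
    ∃ X : Set (Sym2 V), X ⊆ G.edgeSet ∧ (X.ncard : ℝ) ≤ f k ∧
      ¬ IsMinor H (G.deleteEdges X)
/-- `GX` is the graph `G^×` obtained from the connected subgraph `G ⊆ H` and `r`:
it has a copy `φ v` of each vertex `v` of `G` with `d_H v ≥ 3` (a *branch vertex*);
`G` decomposes into segments indexed by `ι`, each a path `P i` in `G`; a non-pendant
segment runs between two branch vertices and its internal vertices have `H`-degree 2,
and it is replaced by `r` internally disjoint paths of length `max (length) 2` between
the copies of its ends; a pendant segment runs from a vertex `a i` with `d_G (a i) = 1`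
and `d_H (a i) ≤ 2` to the closest branch vertex `b i`, and it is replaced by `r` paths
of its length which are disjoint except for the copy of `b i`. -/
def IsGTimes {V W : Type} (H : SimpleGraph V) (G : H.Subgraph) (r : ℕ)
    (GX : SimpleGraph W) : Prop :=
  ∃ (φ : V → W) (ι : Type) (pend : ι → Prop) (a b : ι → V)
    (P : ∀ i, G.spanningCoe.Walk (a i) (b i))
    (c : ι → Fin r → W) (Q : ∀ i j, GX.Walk (c i j) (φ (b i))),
    -- distinct branch vertices get distinct copies
    Set.InjOn φ {v : V | v ∈ G.verts ∧ 3 ≤ (H.neighborSet v).ncard} ∧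
    -- the segments are paths in `G` ending at a branch vertex
    (∀ i, (P i).IsPath) ∧
    (∀ i, a i ∈ G.verts ∧ b i ∈ G.verts ∧ 3 ≤ (H.neighborSet (b i)).ncard) ∧
    -- non-pendant segments: nontrivial paths between branch vertices whose internal
    -- vertices have degree 2 in `H`
    (∀ i, ¬ pend i → 3 ≤ (H.neighborSet (a i)).ncard ∧ 1 ≤ (P i).length ∧
      ∀ v ∈ (P i).support, v ≠ a i → v ≠ b i → (H.neighborSet v).ncard = 2) ∧
    -- pendant segments: from a vertex of `G`-degree 1 and `H`-degree at most 2 to the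
    -- closest branch vertex
    (∀ i, pend i → (G.neighborSet (a i)).ncard = 1 ∧ (H.neighborSet (a i)).ncard ≤ 2 ∧
      ∀ v ∈ (P i).support, v ≠ b i → (H.neighborSet v).ncard ≤ 2) ∧
    -- the segments decompose `G`
    (∀ e ∈ G.edgeSet, ∃! i, e ∈ (P i).edges) ∧
    (∀ v ∈ G.verts, 3 ≤ (H.neighborSet v).ncard ∨ ∃ i, v ∈ (P i).support) ∧
    (∀ i i', i ≠ i' → ∀ v, v ∈ (P i).support → v ∈ (P i').support →
      3 ≤ (H.neighborSet v).ncard) ∧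
    -- each segment is replaced by `r` paths of the prescribed length
    (∀ i j, (Q i j).IsPath) ∧
    (∀ i j, ¬ pend i → c i j = φ (a i) ∧ (Q i j).length = max (P i).length 2) ∧
    (∀ i j, pend i → (Q i j).length = (P i).length) ∧
    -- the `r` paths replacing a segment are disjoint except for the copies of its
    -- branch-vertex ends
    (∀ i j j', j ≠ j' → ∀ w, w ∈ (Q i j).support → w ∈ (Q i j').support →
      (¬ pend i ∧ (w = φ (a i) ∨ w = φ (b i))) ∨ (pend i ∧ w = φ (b i))) ∧
    -- paths replacing distinct segments meet only in copies of branch vertices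
    (∀ i j i' j', i ≠ i' → ∀ w, w ∈ (Q i j).support → w ∈ (Q i' j').support →
      ∃ v, v ∈ G.verts ∧ 3 ≤ (H.neighborSet v).ncard ∧ w = φ v) ∧
    -- interior vertices of the new paths, and free ends of pendant paths, are not
    -- copies of branch vertices
    (∀ i j w, w ∈ (Q i j).support → w ≠ c i j → w ≠ φ (b i) →
      ∀ v, v ∈ G.verts → 3 ≤ (H.neighborSet v).ncard → w ≠ φ v) ∧
    (∀ i j, pend i → ∀ v, v ∈ G.verts → 3 ≤ (H.neighborSet v).ncard → c i j ≠ φ v) ∧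
    -- `GX` consists exactly of the copies of branch vertices and the new paths
    (∀ w : W, (∃ v, v ∈ G.verts ∧ 3 ≤ (H.neighborSet v).ncard ∧ w = φ v) ∨
      ∃ i j, w ∈ (Q i j).support) ∧
    (∀ e : Sym2 W, e ∈ GX.edgeSet ↔ ∃ i j, e ∈ (Q i j).edges)


namespace MyAux

lemma walk_getVert_injOn {V : Type*} {G : SimpleGraph V} {u v : V} {p : G.Walk u v}
    (hp : p.IsPath) : ∀ m, m ≤ p.length → ∀ n, n ≤ p.length →
      p.getVert m = p.getVert n → m = n := by
  induction p with
  | nil => intro m hm n hn _; simp only [Walk.length_nil, Nat.le_zero] at hm hn; omega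
  | @cons x y z h q ih =>
    rw [Walk.cons_isPath_iff] at hp
    intro m hm n hn heq
    match m, n with
    | 0, 0 => rfl
    | 0, (n+1) =>
      exfalso
      rw [Walk.getVert_zero, Walk.getVert_cons_succ] at heq
      exact hp.2 (by
        rw [Walk.mem_support_iff_exists_getVert]
        exact ⟨n, heq.symm, by simpa [Nat.succ_le_succ_iff] using hn⟩)
    | (m+1), 0 =>
      exfalso
      rw [Walk.getVert_zero, Walk.getVert_cons_succ] at heq
      exact hp.2 (by
        rw [Walk.mem_support_iff_exists_getVert]
        exact ⟨m, heq, by simpa [Nat.succ_le_succ_iff] using hm⟩)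
    | (m+1), (n+1) =>
      rw [Walk.getVert_cons_succ, Walk.getVert_cons_succ] at heq
      have := ih hp.1 m (by simpa [Nat.succ_le_succ_iff] using hm) n
        (by simpa [Nat.succ_le_succ_iff] using hn) heq
      omega

lemma walk_mem_edges_iff {V : Type*} {G : SimpleGraph V} {u v : V} {p : G.Walk u v}
    {e : Sym2 V} :
    e ∈ p.edges ↔ ∃ k, k < p.length ∧ e = s(p.getVert k, p.getVert (k+1)) := by
  induction p with
  | nil => simp
  | @cons x y z h q ih =>
    rw [Walk.edges_cons, List.mem_cons, ih]
    constructor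
    · rintro (rfl | ⟨k, hk, rfl⟩)
      · exact ⟨0, by simp [Walk.getVert_zero, Walk.getVert_cons_succ], by
          simp [Walk.getVert_zero, Walk.getVert_cons_succ]⟩
      · exact ⟨k + 1, by simp [Nat.succ_lt_succ_iff, hk], by
          simp [Walk.getVert_cons_succ]⟩
    · rintro ⟨k, hk, rfl⟩
      match k with
      | 0 =>
        left
        simp [Walk.getVert_zero, Walk.getVert_cons_succ]
      | (k+1) =>
        right
        exact ⟨k, by simpa [Nat.succ_lt_succ_iff] using hk, by
          simp [Walk.getVert_cons_succ]⟩

lemma induce_connected_star {W : Type*} {Gr : SimpleGraph W} {s : Set W} {w0 : W}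
    (h0 : w0 ∈ s) (h : ∀ w ∈ s, w = w0 ∨ Gr.Adj w0 w) :
    (Gr.induce s).Connected := by
  have key : ∀ x : s, (Gr.induce s).Reachable ⟨w0, h0⟩ x := by
    rintro ⟨x, hx⟩
    rcases h x hx with rfl | hadj
    · exact Reachable.refl _
    · exact (SimpleGraph.Adj.reachable (by simpa using hadj))
  rw [SimpleGraph.connected_iff]
  exact ⟨fun x y => (key x).symm.trans (key y), ⟨⟨w0, h0⟩⟩⟩

lemma path_no_end_edge {V : Type*} {G : SimpleGraph V} {u v : V} {p : G.Walk u v}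
    (hp : p.IsPath) (h2 : 2 ≤ p.length) : s(u, v) ∉ p.edges := by
  intro he
  rw [walk_mem_edges_iff] at he
  obtain ⟨k, hk, hke⟩ := he
  rw [Sym2.eq_iff] at hke
  rcases hke with ⟨h1, h2'⟩ | ⟨h1, h2'⟩
  · have hk0 : k = 0 := walk_getVert_injOn hp k (le_of_lt hk) 0 (Nat.zero_le _)
      (by rw [h1.symm, Walk.getVert_zero])
    have hk1 : k + 1 = p.length := walk_getVert_injOn hp (k+1) (by omega) p.length le_rfl
      (by rw [h2'.symm, Walk.getVert_length])
    omega
  · have : k = p.length := walk_getVert_injOn hp k (le_of_lt hk) p.length le_rfl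
      (by rw [← h2', Walk.getVert_length])
    omega

end MyAux

/-- If `G ⊆ H` is a connected subgraph with a vertex of `H`-degree at
least 3 and `GX = G^×` is the graph constructed from `G`, `H` and `r`, then for every
set `X` of at most `r - 1` edges of `G^×`, the graph `G^× - X` contains `G` as a minor. -/
theorem gtimes_minor_of_deleteEdges {V W : Type} [Fintype V] [Fintype W]
    (H : SimpleGraph V) (G : H.Subgraph) (hGconn : G.coe.Connected)
    (hbr : ∃ v ∈ G.verts, 3 ≤ (H.neighborSet v).ncard)
    (r : ℕ) (GX : SimpleGraph W) (hGX : IsGTimes H G r GX)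
    (X : Set (Sym2 W)) (hX : X ⊆ GX.edgeSet) (hXcard : X.ncard < r) :
    IsMinor G.coe (GX.deleteEdges X) := by
  classical
  obtain ⟨φ, ι, pend, a, b, P, c, Q, hinj, hPpath, hends, hnonpend, hpend, hedec, hvert,
    hcross, hQpath, hQnp, hQp, hQdw, hQdb, hint, hcfree, hWcov, hEcov⟩ := hGX
  -- basic length facts
  have hPlen : ∀ i, 1 ≤ (P i).length := by
    intro i
    by_cases hp : pend i
    · by_contra hlen
      have h0 : (P i).length = 0 := by omega
      have hab : a i = b i := Walk.eq_of_length_eq_zero h0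
      have h1 := (hpend i hp).2.1
      have h2 := (hends i).2.2
      rw [← hab] at h2
      omega
    · exact (hnonpend i hp).2.1
  -- choose for each segment a path avoiding X
  have hchoose : ∀ i, ∃ jj : Fin r, ∀ e ∈ (Q i jj).edges, e ∉ X := by
    intro i
    by_contra hcon
    push_neg at hcon
    choose f hf1 hf2 using hcon
    have hfinj : Function.Injective f := by
      intro j1 j2 heq
      by_contra hne
      obtain ⟨k, hk, hre⟩ := MyAux.walk_mem_edges_iff.mp (hf1 j1)
      set x := (Q i j1).getVert k with hxdef
      set y := (Q i j1).getVert (k+1) with hydef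
      have hadjxy : GX.Adj x y := (Q i j1).adj_getVert_succ hk
      have hxy : x ≠ y := hadjxy.ne
      have hxs1 : x ∈ (Q i j1).support :=
        Walk.mem_support_iff_exists_getVert.mpr ⟨k, rfl, le_of_lt hk⟩
      have hys1 : y ∈ (Q i j1).support :=
        Walk.mem_support_iff_exists_getVert.mpr ⟨k+1, rfl, hk⟩
      have he2 : s(x, y) ∈ (Q i j2).edges := by rw [← hre, heq]; exact hf1 j2
      have hxs2 : x ∈ (Q i j2).support := Walk.fst_mem_support_of_mem_edges _ he2
      have hys2 : y ∈ (Q i j2).support := Walk.snd_mem_support_of_mem_edges _ he2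
      have hxx := hQdw i j1 j2 hne x hxs1 hxs2
      have hyy := hQdw i j1 j2 hne y hys1 hys2
      by_cases hp : pend i
      · rcases hxx with ⟨hnp, _⟩ | ⟨_, hx⟩
        · exact hnp hp
        rcases hyy with ⟨hnp, _⟩ | ⟨_, hy⟩
        · exact hnp hp
        exact hxy (hx.trans hy.symm)
      · rcases hxx with ⟨_, hx⟩ | ⟨hp', _⟩
        swap
        · exact hp hp'
        rcases hyy with ⟨_, hy⟩ | ⟨hp', _⟩
        swap
        · exact hp hp'
        have hc1 : c i j1 = φ (a i) := (hQnp i j1 hp).1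
        have hl1 : 2 ≤ (Q i j1).length := by
          have := (hQnp i j1 hp).2
          rw [this]; exact le_max_right _ _
        have hnoe : s(c i j1, φ (b i)) ∉ (Q i j1).edges :=
          MyAux.path_no_end_edge (hQpath i j1) hl1
        have hxyedge : s(x, y) ∈ (Q i j1).edges := by rw [← hre]; exact hf1 j1
        rcases hx with hx | hx <;> rcases hy with hy | hy
        · exact absurd (hx.trans hy.symm) hxy
        · have hsw : s(x, y) = s(c i j1, φ (b i)) := by rw [hx, hy, hc1]
          exact hnoe (hsw ▸ hxyedge)
        · have hsw : s(x, y) = s(c i j1, φ (b i)) := by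
            rw [hx, hy, hc1]; exact Sym2.eq_swap
          exact hnoe (hsw ▸ hxyedge)
        · exact absurd (hx.trans hy.symm) hxy
    exfalso
    haveI : Finite ↥X := Set.toFinite X
    have hcard : Nat.card (Fin r) ≤ Nat.card ↥X :=
      Nat.card_le_card_of_injective (fun jj => (⟨f jj, hf2 jj⟩ : X))
        (fun j1 j2 h => hfinj (congrArg Subtype.val h))
    rw [Nat.card_eq_fintype_card, Fintype.card_fin, Nat.card_coe_set_eq] at hcard
    omega
  choose j hj using hchoose
  -- length relations between P and Q
  have hQge : ∀ i, (P i).length ≤ (Q i (j i)).length := by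
    intro i
    by_cases hp : pend i
    · rw [hQp i (j i) hp]
    · rw [(hQnp i (j i) hp).2]; exact le_max_left _ _
  have hQlen1 : ∀ i, ¬ pend i → (P i).length = 1 → (Q i (j i)).length = 2 := by
    intro i hnp h1
    have := (hQnp i (j i) hnp).2
    rw [h1] at this
    simpa using this
  -- edges of chosen paths survive deletion
  have hadjQ : ∀ i k, k < (Q i (j i)).length →
      (GX.deleteEdges X).Adj ((Q i (j i)).getVert k) ((Q i (j i)).getVert (k+1)) := by
    intro i k hk
    rw [SimpleGraph.deleteEdges_adj]
    refine ⟨(Q i (j i)).adj_getVert_succ hk, ?_⟩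
    exact hj i _ (MyAux.walk_mem_edges_iff.mpr ⟨k, hk, rfl⟩)
  -- positions of branch vertices on segments
  have hbranchpos : ∀ i k, k ≤ (P i).length →
      3 ≤ (H.neighborSet ((P i).getVert k)).ncard →
      (¬ pend i ∧ k = 0) ∨ k = (P i).length := by
    intro i k hk hb
    have hsup : (P i).getVert k ∈ (P i).support :=
      Walk.mem_support_iff_exists_getVert.mpr ⟨k, rfl, hk⟩
    by_cases hp : pend i
    · right
      by_cases heq : (P i).getVert k = b i
      · exact MyAux.walk_getVert_injOn (hPpath i) k hk (P i).length le_rfl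
          (by rw [heq, Walk.getVert_length])
      · have := (hpend i hp).2.2 _ hsup heq
        omega
    · by_cases heqa : (P i).getVert k = a i
      · exact Or.inl ⟨hp, MyAux.walk_getVert_injOn (hPpath i) k hk 0 (Nat.zero_le _)
          (by rw [heqa, Walk.getVert_zero])⟩
      by_cases heqb : (P i).getVert k = b i
      · exact Or.inr (MyAux.walk_getVert_injOn (hPpath i) k hk (P i).length le_rfl
          (by rw [heqb, Walk.getVert_length]))
      · have := (hnonpend i hp).2.2 _ hsup heqa heqb
        omega
  -- interior vertices of Q-paths are not copies of branch vertices
  have hinterior : ∀ i (jj : Fin r) k, 0 < k → k < (Q i jj).length →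
      ∀ v, v ∈ G.verts → 3 ≤ (H.neighborSet v).ncard → (Q i jj).getVert k ≠ φ v := by
    intro i jj k hk0 hkl v hv hb
    have hsup : (Q i jj).getVert k ∈ (Q i jj).support :=
      Walk.mem_support_iff_exists_getVert.mpr ⟨k, rfl, le_of_lt hkl⟩
    have hne0 : (Q i jj).getVert k ≠ c i jj := by
      intro h
      have := MyAux.walk_getVert_injOn (hQpath i jj) k (le_of_lt hkl) 0 (Nat.zero_le _)
        (by rw [h, Walk.getVert_zero])
      omega
    have hnel : (Q i jj).getVert k ≠ φ (b i) := by
      intro h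
      have := MyAux.walk_getVert_injOn (hQpath i jj) k (le_of_lt hkl) (Q i jj).length le_rfl
        (by rw [h, Walk.getVert_length])
      omega
    exact hint i jj _ hsup hne0 hnel v hv hb
  have hBmne : ∀ i, ¬ pend i → (P i).length = 1 → ∀ v', v' ∈ G.verts →
      3 ≤ (H.neighborSet v').ncard → (Q i (j i)).getVert 1 ≠ φ v' := by
    intro i hnp h1 v' hv' hb'
    exact hinterior i (j i) 1 (by omega) (by rw [hQlen1 i hnp h1]; omega) v' hv' hb'
  have hCne : ∀ i k, k ≤ (P i).length →
      ¬ 3 ≤ (H.neighborSet ((P i).getVert k)).ncard → ∀ v', v' ∈ G.verts →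
      3 ≤ (H.neighborSet v').ncard → (Q i (j i)).getVert k ≠ φ v' := by
    intro i k hk hnb v' hv' hb'
    by_cases hkl : k = (P i).length
    · exfalso
      rw [hkl, Walk.getVert_length] at hnb
      exact hnb (hends i).2.2
    have hk' : k < (P i).length := lt_of_le_of_ne hk hkl
    by_cases hk0 : k = 0
    · subst hk0
      by_cases hp : pend i
      · rw [Walk.getVert_zero]
        exact hcfree i (j i) hp v' hv' hb'
      · exfalso
        rw [Walk.getVert_zero] at hnb
        exact hnb (hnonpend i hp).1
    · exact hinterior i (j i) k (by omega) (lt_of_lt_of_le hk' (hQge i)) v' hv' hb'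
  have hsupQ : ∀ i (jj : Fin r) k, k ≤ (Q i jj).length →
      (Q i jj).getVert k ∈ (Q i jj).support := by
    intro i jj k hk
    exact Walk.mem_support_iff_exists_getVert.mpr ⟨k, rfl, hk⟩
  -- membership of Q-vertices in branch sets (when lengths agree)
  have hmemB : ∀ i k, k ≤ (P i).length → (Q i (j i)).length = (P i).length →
      ((3 ≤ (H.neighborSet (((P i).getVert k))).ncard ∧ ((Q i (j i)).getVert k) = φ (((P i).getVert k))) ∨ (3 ≤ (H.neighborSet (((P i).getVert k))).ncard ∧ ∃ i_b, ¬ pend i_b ∧ (P i_b).length = 1 ∧ a i_b = (((P i).getVert k)) ∧ ((Q i (j i)).getVert k) = (Q i_b (j i_b)).getVert 1) ∨ (¬ 3 ≤ (H.neighborSet (((P i).getVert k))).ncard ∧ ∃ i_b k_b, k_b ≤ (P i_b).length ∧ (P i_b).getVert k_b = (((P i).getVert k)) ∧ ((Q i (j i)).getVert k) = (Q i_b (j i_b)).getVert k_b)) := by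
    intro i k hk hlen
    by_cases hb : 3 ≤ (H.neighborSet ((P i).getVert k)).ncard
    · left
      refine ⟨hb, ?_⟩
      rcases hbranchpos i k hk hb with ⟨hnp, rfl⟩ | rfl
      · rw [Walk.getVert_zero, Walk.getVert_zero, (hQnp i (j i) hnp).1]
      · rw [Walk.getVert_length, ← hlen, Walk.getVert_length]
    · right; right
      exact ⟨hb, i, k, hk, rfl, rfl⟩
  -- disjointness core
  have hdisj : ∀ v1 v2 : V, v1 ∈ G.verts → v2 ∈ G.verts → v1 ≠ v2 → ∀ w : W,
      ((3 ≤ (H.neighborSet (v1)).ncard ∧ w = φ (v1)) ∨ (3 ≤ (H.neighborSet (v1)).ncard ∧ ∃ i_b, ¬ pend i_b ∧ (P i_b).length = 1 ∧ a i_b = (v1) ∧ w = (Q i_b (j i_b)).getVert 1) ∨ (¬ 3 ≤ (H.neighborSet (v1)).ncard ∧ ∃ i_b k_b, k_b ≤ (P i_b).length ∧ (P i_b).getVert k_b = (v1) ∧ w = (Q i_b (j i_b)).getVert k_b)) → ((3 ≤ (H.neighborSet (v2)).ncard ∧ w = φ (v2)) ∨ (3 ≤ (H.neighborSet (v2)).ncard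 ∧ ∃ i_b, ¬ pend i_b ∧ (P i_b).length = 1 ∧ a i_b = (v2) ∧ w = (Q i_b (j i_b)).getVert 1) ∨ (¬ 3 ≤ (H.neighborSet (v2)).ncard ∧ ∃ i_b k_b, k_b ≤ (P i_b).length ∧ (P i_b).getVert k_b = (v2) ∧ w = (Q i_b (j i_b)).getVert k_b)) → False := by
    intro v1 v2 hm1 hm2 hne w h1 h2
    rcases h1 with ⟨hb1, rfl⟩ | ⟨hb1, i, hnp, hl1, hai, hw⟩ | ⟨hb1, i, k, hk, hgv, hw⟩
    · -- w = φ v1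
      rcases h2 with ⟨hb2, he2⟩ | ⟨hb2, i, hnp, hl1, hai, hw⟩ | ⟨hb2, i, k, hk, hgv, hw⟩
      · exact hne (hinj ⟨hm1, hb1⟩ ⟨hm2, hb2⟩ he2)
      · exact hBmne i hnp hl1 v1 hm1 hb1 hw.symm
      · exact hCne i k hk (by rw [hgv]; exact hb2) v1 hm1 hb1 hw.symm
    · -- w = middle vertex of short nonpendant segment i with a i = v1
      rcases h2 with ⟨hb2, rfl⟩ | ⟨hb2, i', hnp', hl1', hai', hw'⟩ | ⟨hb2, i', k', hk', hgv', hw'⟩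
      · exact hBmne i hnp hl1 v2 hm2 hb2 hw.symm
      · by_cases hii : i = i'
        · subst hii
          exact hne (hai.symm.trans hai')
        · have hs1 : w ∈ (Q i (j i)).support := by
            rw [hw]; exact hsupQ i (j i) 1 (by rw [hQlen1 i hnp hl1]; omega)
          have hs2 : w ∈ (Q i' (j i')).support := by
            rw [hw']; exact hsupQ i' (j i') 1 (by rw [hQlen1 i' hnp' hl1']; omega)
          obtain ⟨v0, hv0m, hv0b, hwv0⟩ := hQdb i (j i) i' (j i') hii w hs1 hs2
          exact hBmne i hnp hl1 v0 hv0m hv0b (hw ▸ hwv0)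
      · by_cases hii : i = i'
        · subst hii
          rw [hl1] at hk'
          interval_cases k'
          · rw [Walk.getVert_zero] at hgv'
            rw [← hgv'] at hb2
            exact hb2 (hnonpend i hnp).1
          · have hb' : (P i).getVert 1 = b i := by
              conv_lhs => rw [← hl1]
              rw [Walk.getVert_length]
            rw [hb'] at hgv'
            rw [← hgv'] at hb2
            exact hb2 (hends i).2.2
        · have hs1 : w ∈ (Q i (j i)).support := by
            rw [hw]; exact hsupQ i (j i) 1 (by rw [hQlen1 i hnp hl1]; omega)
          have hs2 : w ∈ (Q i' (j i')).support := by
            rw [hw']; exact hsupQ i' (j i') k' (le_trans hk' (hQge i'))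
          obtain ⟨v0, hv0m, hv0b, hwv0⟩ := hQdb i (j i) i' (j i') hii w hs1 hs2
          exact hBmne i hnp hl1 v0 hv0m hv0b (hw ▸ hwv0)
    · -- w = Q-vertex over a non-branch vertex v1
      rcases h2 with ⟨hb2, rfl⟩ | ⟨hb2, i', hnp', hl1', hai', hw'⟩ | ⟨hb2, i', k', hk', hgv', hw'⟩
      · exact hCne i k hk (by rw [hgv]; exact hb1) v2 hm2 hb2 hw.symm
      · by_cases hii : i = i'
        · subst hii
          rw [hl1'] at hk
          interval_cases k
          · rw [Walk.getVert_zero] at hgv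
            rw [← hgv] at hb1
            exact hb1 (hnonpend i hnp').1
          · have hb' : (P i).getVert 1 = b i := by
              conv_lhs => rw [← hl1']
              rw [Walk.getVert_length]
            rw [hb'] at hgv
            rw [← hgv] at hb1
            exact hb1 (hends i).2.2
        · have hs1 : w ∈ (Q i (j i)).support := by
            rw [hw]; exact hsupQ i (j i) k (le_trans hk (hQge i))
          have hs2 : w ∈ (Q i' (j i')).support := by
            rw [hw']; exact hsupQ i' (j i') 1 (by rw [hQlen1 i' hnp' hl1']; omega)
          obtain ⟨v0, hv0m, hv0b, hwv0⟩ := hQdb i (j i) i' (j i') hii w hs1 hs2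
          exact hCne i k hk (by rw [hgv]; exact hb1) v0 hv0m hv0b (hw ▸ hwv0)
      · by_cases hii : i = i'
        · subst hii
          have hkk : k = k' := MyAux.walk_getVert_injOn (hQpath i (j i)) k
            (le_trans hk (hQge i)) k' (le_trans hk' (hQge i)) (by rw [← hw, ← hw'])
          subst hkk
          exact hne (hgv.symm.trans hgv')
        · have hs1 : w ∈ (Q i (j i)).support := by
            rw [hw]; exact hsupQ i (j i) k (le_trans hk (hQge i))
          have hs2 : w ∈ (Q i' (j i')).support := by
            rw [hw']; exact hsupQ i' (j i') k' (le_trans hk' (hQge i'))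
          obtain ⟨v0, hv0m, hv0b, hwv0⟩ := hQdb i (j i) i' (j i') hii w hs1 hs2
          exact hCne i k hk (by rw [hgv]; exact hb1) v0 hv0m hv0b (hw ▸ hwv0)
  -- the helper for the adjacency condition
  have hstep : ∀ i k, k < (P i).length → ∃ x y : W,
      ((3 ≤ (H.neighborSet (((P i).getVert k))).ncard ∧ x = φ (((P i).getVert k))) ∨ (3 ≤ (H.neighborSet (((P i).getVert k))).ncard ∧ ∃ i_b, ¬ pend i_b ∧ (P i_b).length = 1 ∧ a i_b = (((P i).getVert k)) ∧ x = (Q i_b (j i_b)).getVert 1) ∨ (¬ 3 ≤ (H.neighborSet (((P i).getVert k))).ncard ∧ ∃ i_b k_b, k_b ≤ (P i_b).length ∧ (P i_b).getVert k_b = (((P i).getVert k)) ∧ x = (Q i_b (j i_b)).getVert k_b)) ∧ ((3 ≤ (H.neighborSet (((P i).getVert (k+1)))).ncard ∧ y = φ (((P i).getVert (k+1)))) ∨ (3 ≤ (H.neighborSet (((P i).getVert (k+1)))).ncard ∧ ∃ i_b, ¬ pend i_b ∧ (P i_b).length = 1 ∧ a i_b = (((P i).getVert (k+1))) ∧ y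 = (Q i_b (j i_b)).getVert 1) ∨ (¬ 3 ≤ (H.neighborSet (((P i).getVert (k+1)))).ncard ∧ ∃ i_b k_b, k_b ≤ (P i_b).length ∧ (P i_b).getVert k_b = (((P i).getVert (k+1))) ∧ y = (Q i_b (j i_b)).getVert k_b)) ∧
      (GX.deleteEdges X).Adj x y := by
    intro i k hk
    by_cases hc : ¬ pend i ∧ (P i).length = 1
    · obtain ⟨hnp, hl1⟩ := hc
      have hk0 : k = 0 := by omega
      subst hk0
      have hQl : (Q i (j i)).length = 2 := hQlen1 i hnp hl1
      refine ⟨(Q i (j i)).getVert 1, φ (b i), ?_, ?_, ?_⟩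
      · right; left
        rw [Walk.getVert_zero]
        exact ⟨(hnonpend i hnp).1, i, hnp, hl1, rfl, rfl⟩
      · left
        have hb' : (P i).getVert (0+1) = b i := by
          conv_lhs => rw [show (0+1 : ℕ) = (P i).length by omega]
          rw [Walk.getVert_length]
        rw [hb']
        exact ⟨(hends i).2.2, rfl⟩
      · have h12 := hadjQ i 1 (by omega)
        have hb' : (Q i (j i)).getVert (1+1) = φ (b i) := by
          conv_lhs => rw [show (1+1 : ℕ) = (Q i (j i)).length by omega]
          rw [Walk.getVert_length]
        rwa [hb'] at h12
    · have hlen : (Q i (j i)).length = (P i).length := by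
        by_cases hp : pend i
        · exact hQp i (j i) hp
        · have h1 : (P i).length ≠ 1 := fun h => hc ⟨hp, h⟩
          have h2 : 2 ≤ (P i).length := by have := hPlen i; omega
          rw [(hQnp i (j i) hp).2]
          exact Nat.max_eq_left h2
      refine ⟨(Q i (j i)).getVert k, (Q i (j i)).getVert (k+1),
        hmemB i k (le_of_lt hk) hlen, hmemB i (k+1) hk hlen, hadjQ i k (by omega)⟩
  -- assemble the model
  refine ⟨fun v => {w : W | ((3 ≤ (H.neighborSet ((v : V))).ncard ∧ w = φ ((v : V))) ∨ (3 ≤ (H.neighborSet ((v : V))).ncard ∧ ∃ i_b, ¬ pend i_b ∧ (P i_b).length = 1 ∧ a i_b = ((v : V)) ∧ w = (Q i_b (j i_b)).getVert 1) ∨ (¬ 3 ≤ (H.neighborSet ((v : V))).ncard ∧ ∃ i_b k_b, k_b ≤ (P i_b).length ∧ (P i_b).getVert k_b = ((v : V)) ∧ w = (Q i_b (j i_b)).getVert k_b))}, ?_, ?_, ?_, ?_⟩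
  · -- nonempty
    intro v
    by_cases hb : 3 ≤ (H.neighborSet (v : V)).ncard
    · exact ⟨φ (v : V), Or.inl ⟨hb, rfl⟩⟩
    · obtain ⟨i, hsup⟩ := (hvert (v : V) v.2).resolve_left hb
      obtain ⟨k, hgv, hk⟩ := Walk.mem_support_iff_exists_getVert.mp hsup
      exact ⟨(Q i (j i)).getVert k, Or.inr (Or.inr ⟨hb, i, k, hk, hgv, rfl⟩)⟩
  · -- connectedness of branch sets
    intro v
    by_cases hb : 3 ≤ (H.neighborSet (v : V)).ncard
    · apply MyAux.induce_connected_star (w0 := φ (v : V)) (Or.inl ⟨hb, rfl⟩)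
      rintro w (⟨-, rfl⟩ | ⟨-, i, hnp, hl1, hai, hw⟩ | ⟨hb', -⟩)
      · exact Or.inl rfl
      · right
        have hQl : (Q i (j i)).length = 2 := hQlen1 i hnp hl1
        have h01 := hadjQ i 0 (by omega)
        have heq0 : φ (v : V) = (Q i (j i)).getVert 0 := by
          rw [Walk.getVert_zero, (hQnp i (j i) hnp).1, hai]
        rw [hw, heq0]
        exact h01
      · exact absurd hb hb'
    · obtain ⟨i0, hsup⟩ := (hvert (v : V) v.2).resolve_left hb
      obtain ⟨k0, hgv0, hk0⟩ := Walk.mem_support_iff_exists_getVert.mp hsup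
      apply MyAux.induce_connected_star (w0 := (Q i0 (j i0)).getVert k0)
        (Or.inr (Or.inr ⟨hb, i0, k0, hk0, hgv0, rfl⟩))
      rintro w (⟨hb', -⟩ | ⟨hb', -⟩ | ⟨-, i, k, hk, hgv, hw⟩)
      · exact absurd hb' hb
      · exact absurd hb' hb
      · left
        have hii : i = i0 := by
          by_contra hii
          apply hb
          refine hcross i i0 hii (v : V) ?_ hsup
          exact hgv ▸ Walk.mem_support_iff_exists_getVert.mpr ⟨k, rfl, hk⟩
        subst hii
        have hkk : k = k0 := MyAux.walk_getVert_injOn (hPpath i) k hk k0 hk0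
          (by rw [hgv, hgv0])
        rw [hw, hkk]
  · -- pairwise disjointness
    intro u v hne
    rw [Set.disjoint_left]
    intro w h1 h2
    exact hdisj u.1 v.1 u.2 v.2 (fun h => hne (Subtype.ext h)) w h1 h2
  · -- adjacency
    intro u v huv
    have hadj : G.Adj u.1 v.1 := huv
    have he : s(u.1, v.1) ∈ G.edgeSet := Subgraph.mem_edgeSet.mpr hadj
    obtain ⟨i, hei, -⟩ := hedec _ he
    obtain ⟨k, hk, hsym⟩ := MyAux.walk_mem_edges_iff.mp hei
    obtain ⟨x, y, hx, hy, hxy⟩ := hstep i k hk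
    rw [Sym2.eq_iff] at hsym
    rcases hsym with ⟨hu1, hv1⟩ | ⟨hu1, hv1⟩
    · have hx' : ((3 ≤ (H.neighborSet ((u.1 : V))).ncard ∧ x = φ ((u.1 : V))) ∨ (3 ≤ (H.neighborSet ((u.1 : V))).ncard ∧ ∃ i_b, ¬ pend i_b ∧ (P i_b).length = 1 ∧ a i_b = ((u.1 : V)) ∧ x = (Q i_b (j i_b)).getVert 1) ∨ (¬ 3 ≤ (H.neighborSet ((u.1 : V))).ncard ∧ ∃ i_b k_b, k_b ≤ (P i_b).length ∧ (P i_b).getVert k_b = ((u.1 : V)) ∧ x = (Q i_b (j i_b)).getVert k_b)) := by rw [hu1]; exact hx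
      have hy' : ((3 ≤ (H.neighborSet ((v.1 : V))).ncard ∧ y = φ ((v.1 : V))) ∨ (3 ≤ (H.neighborSet ((v.1 : V))).ncard ∧ ∃ i_b, ¬ pend i_b ∧ (P i_b).length = 1 ∧ a i_b = ((v.1 : V)) ∧ y = (Q i_b (j i_b)).getVert 1) ∨ (¬ 3 ≤ (H.neighborSet ((v.1 : V))).ncard ∧ ∃ i_b k_b, k_b ≤ (P i_b).length ∧ (P i_b).getVert k_b = ((v.1 : V)) ∧ y = (Q i_b (j i_b)).getVert k_b)) := by rw [hv1]; exact hy
      exact ⟨x, hx', y, hy', hxy⟩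
    · have hx' : ((3 ≤ (H.neighborSet ((u.1 : V))).ncard ∧ y = φ ((u.1 : V))) ∨ (3 ≤ (H.neighborSet ((u.1 : V))).ncard ∧ ∃ i_b, ¬ pend i_b ∧ (P i_b).length = 1 ∧ a i_b = ((u.1 : V)) ∧ y = (Q i_b (j i_b)).getVert 1) ∨ (¬ 3 ≤ (H.neighborSet ((u.1 : V))).ncard ∧ ∃ i_b k_b, k_b ≤ (P i_b).length ∧ (P i_b).getVert k_b = ((u.1 : V)) ∧ y = (Q i_b (j i_b)).getVert k_b)) := by rw [hu1]; exact hy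
      have hy' : ((3 ≤ (H.neighborSet ((v.1 : V))).ncard ∧ x = φ ((v.1 : V))) ∨ (3 ≤ (H.neighborSet ((v.1 : V))).ncard ∧ ∃ i_b, ¬ pend i_b ∧ (P i_b).length = 1 ∧ a i_b = ((v.1 : V)) ∧ x = (Q i_b (j i_b)).getVert 1) ∨ (¬ 3 ≤ (H.neighborSet ((v.1 : V))).ncard ∧ ∃ i_b k_b, k_b ≤ (P i_b).length ∧ (P i_b).getVert k_b = ((v.1 : V)) ∧ x = (Q i_b (j i_b)).getVert k_b)) := by rw [hv1]; exact hx
      exact ⟨y, hx', x, hy', hxy.symm⟩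
end

section
/- Let H be a graph, let A be a connected component of H containing a vertex of degree at least 3, let 𝓑 be the set of components B of H with A not a minor of B, and let 𝓒 be the set of components C ≠ A of H with A a minor of C. Let r ≥ 3, let A* be any graph, and let H* be the disjoint union of A*, of r vertex-disjoint copies of B for every B ∈ 𝓑, and of the graph C^× (constructed from C, H and r) for every C ∈ 𝓒. Then for every subgraph H' of H* that is a model of H, the part of H' contained in A* contains A as a minor; in particular, if H* contains k edge-disjoint models of H, then A* contains k edge-disjoint models of A. -/
open SimpleGraph

/-- Disjoint union of a family of graphs, on the sigma type of their vertex sets. -/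
def disjUnion {ι : Type} {V : ι → Type} (G : ∀ i, SimpleGraph (V i)) :
    SimpleGraph (Σ i, V i) where
  Adj x y := ∃ (i : ι) (a b : V i), (G i).Adj a b ∧ x = ⟨i, a⟩ ∧ y = ⟨i, b⟩
  symm := by
    constructor
    rintro _ _ ⟨i, a, b, h, rfl, rfl⟩
    exact ⟨i, b, a, h.symm, rfl, rfl⟩
  loopless := by
    constructor
    rintro _ ⟨i, a, b, h, rfl, he⟩
    obtain ⟨-, h2⟩ := Sigma.mk.inj_iff.mp he
    exact (G i).irrefl (eq_of_heq h2 ▸ h)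

/-- The part of a subgraph of a disjoint union that lies in the `i₀`-th summand. -/
def restrictPart {ι : Type} {V : ι → Type} (G : ∀ i, SimpleGraph (V i))
    (S : (disjUnion G).Subgraph) (i₀ : ι) : (G i₀).Subgraph where
  verts := {x : V i₀ | (⟨i₀, x⟩ : Σ i, V i) ∈ S.verts}
  Adj x y := S.Adj ⟨i₀, x⟩ ⟨i₀, y⟩
  adj_sub := by
    intro x y h
    obtain ⟨i, aa, bb, hab, h1, h2⟩ := S.adj_sub h
    obtain ⟨rfl, hx⟩ := Sigma.mk.inj_iff.mp h1
    obtain ⟨-, hy⟩ := Sigma.mk.inj_iff.mp h2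
    rw [eq_of_heq hx, eq_of_heq hy]
    exact hab
  edge_vert := fun h => S.edge_vert h
  symm := ⟨fun x y h => S.symm.symm _ _ h⟩

/-- The connected component `c` of `H`, as a graph. -/
def compGraph {V : Type} (H : SimpleGraph V) (c : H.ConnectedComponent) :
    SimpleGraph c.supp :=
  H.induce c.supp

/-- The components `B` of `H` such that `A` is not a minor of `B` (the set `𝓑`). -/
def BsetT {V : Type} (H : SimpleGraph V) (A : H.ConnectedComponent) : Type :=
  {c : H.ConnectedComponent // ¬ IsMinor (compGraph H A) (compGraph H c)}

/-- The components `C ≠ A` of `H` such that `A` is a minor of `C` (the set `𝓒`). -/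
def CsetT {V : Type} (H : SimpleGraph V) (A : H.ConnectedComponent) : Type :=
  {c : H.ConnectedComponent // c ≠ A ∧ IsMinor (compGraph H A) (compGraph H c)}

/-- Vertex types of the summands of `H*`: one summand for `A*`, `r` summands for each
`B ∈ 𝓑`, and one summand (carrying `C^×`) for each `C ∈ 𝓒`. -/
def famV {V : Type} (H : SimpleGraph V) (A : H.ConnectedComponent) (r : ℕ)
    (WA : Type) (WC : CsetT H A → Type) :
    Unit ⊕ (BsetT H A × Fin r) ⊕ CsetT H A → Type
  | Sum.inl _ => WA
  | Sum.inr (Sum.inl p) => p.1.1.supp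
  | Sum.inr (Sum.inr c) => WC c

/-- The summands of `H*`: the graph `A*`, `r` copies of each `B ∈ 𝓑`, and the graph
`C^×` for each `C ∈ 𝓒`. -/
def fam {V : Type} (H : SimpleGraph V) (A : H.ConnectedComponent) (r : ℕ)
    {WA : Type} (Astar : SimpleGraph WA) {WC : CsetT H A → Type}
    (CX : ∀ c, SimpleGraph (WC c)) :
    ∀ i : Unit ⊕ (BsetT H A × Fin r) ⊕ CsetT H A, SimpleGraph (famV H A r WA WC i)
  | Sum.inl _ => Astar
  | Sum.inr (Sum.inl p) => compGraph H p.1.1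
  | Sum.inr (Sum.inr c) => CX c

/-!
A model of `H` in `H*` has connected branch sets, so every component `K` of `H` is modelled
inside a single summand of `H*`, and `K` is a minor of that summand. A component containing `A`
as a minor cannot be modelled in a copy of some `B ∈ 𝓑`; if none is modelled in `A*`, all of
them are modelled in graphs `C^×`. There the branch set of a vertex of degree at least 3
contains a vertex of degree at least 3, i.e. a copy of a branch vertex of `C`, and distinct
branch sets give distinct copies. This injects the vertices of degree at least 3 of all
components containing `A` as a minor into those of the components in `𝓒`, which miss the ones
of `A` itself: impossible in a finite graph.
-/

lemma SimpleGraph.Reachable.apply_eq_of_forall_adj {U β : Type*} {G : SimpleGraph U} {f : U → β}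
    (hf : ∀ u v, G.Adj u v → f u = f v) {u v : U} (h : G.Reachable u v) : f u = f v := by
  obtain ⟨p⟩ := h
  induction p with
  | nil => rfl
  | cons h _ ih => exact (hf _ _ h).trans ih

section Minors

variable {U V W : Type} {G : SimpleGraph U} {H : SimpleGraph V} {X : SimpleGraph W}

lemma connected_induce_singleton (w : W) : (X.induce {w}).Connected :=
  have : Nonempty ({w} : Set W) := ⟨⟨w, rfl⟩⟩
  ⟨Preconnected.of_subsingleton⟩

lemma isMinor_of_injective (f : G →g X) (hf : Function.Injective f) : IsMinor G X :=
  ⟨fun v => {f v}, fun _ => Set.singleton_nonempty _, fun _ => connected_induce_singleton _,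
    fun _ _ huv => Set.disjoint_singleton.mpr (hf.ne huv),
    fun u v huv => ⟨f u, rfl, f v, rfl, f.map_adj huv⟩⟩

lemma isMinor_refl (G : SimpleGraph U) : IsMinor G G :=
  isMinor_of_injective Hom.id Function.injective_id

lemma connected_induce_biUnion {K : U → Set W} (hK : ∀ u, (X.induce (K u)).Connected)
    (hadj : ∀ u u', G.Adj u u' → ∃ p ∈ K u, ∃ q ∈ K u', X.Adj p q) {s : Set U}
    (hs : (G.induce s).Connected) : (X.induce (⋃ u ∈ s, K u)).Connected := by
  have mem {u} (hu : u ∈ s) {p} (hp : p ∈ K u) : p ∈ ⋃ u ∈ s, K u := Set.mem_biUnion hu hp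
  have within {u} (hu : u ∈ s) {p q} (hp : p ∈ K u) (hq : q ∈ K u) :
      (X.induce (⋃ u ∈ s, K u)).Reachable ⟨p, mem hu hp⟩ ⟨q, mem hu hq⟩ :=
    ((hK u).preconnected ⟨p, hp⟩ ⟨q, hq⟩).map
      (induceHomOfLE X (Set.subset_biUnion_of_mem (u := K) hu)).toHom
  have along {z z' : s} (w : (G.induce s).Walk z z') {p q} (hp : p ∈ K z) (hq : q ∈ K z') :
      (X.induce (⋃ u ∈ s, K u)).Reachable ⟨p, mem z.2 hp⟩ ⟨q, mem z'.2 hq⟩ := by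
    induction w generalizing p with
    | nil => exact within (Subtype.prop _) hp hq
    | @cons a b _ h w ih =>
      obtain ⟨p', hp', q', hq', hpq⟩ := hadj _ _ h
      have hstep : (X.induce _).Adj ⟨p', mem a.2 hp'⟩ ⟨q', mem b.2 hq'⟩ := hpq
      exact (within a.2 hp hp').trans (hstep.reachable.trans (ih hq' hq))
  obtain ⟨⟨u, hu⟩⟩ := hs.nonempty
  obtain ⟨⟨p, hp⟩⟩ := (hK u).nonempty
  have : Nonempty (⋃ u ∈ s, K u) := ⟨⟨p, mem hu hp⟩⟩
  refine ⟨fun ⟨p, hp⟩ ⟨q, hq⟩ => ?_⟩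
  obtain ⟨u, hu, hpu⟩ := Set.mem_iUnion₂.mp hp
  obtain ⟨u', hu', hqu'⟩ := Set.mem_iUnion₂.mp hq
  obtain ⟨w⟩ := hs.preconnected ⟨u, hu⟩ ⟨u', hu'⟩
  exact along w hpu hqu'

lemma IsMinor.trans {Y : SimpleGraph U} (h₁ : IsMinor H Y) (h₂ : IsMinor Y X) :
    IsMinor H X := by
  obtain ⟨B₁, hne₁, hconn₁, hdisj₁, hadj₁⟩ := h₁
  obtain ⟨B₂, hne₂, hconn₂, hdisj₂, hadj₂⟩ := h₂
  refine ⟨fun v => ⋃ u ∈ B₁ v, B₂ u, fun v => ?_,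
    fun v => connected_induce_biUnion hconn₂ hadj₂ (hconn₁ v), fun v v' hvv' => ?_,
    fun v v' hvv' => ?_⟩
  · obtain ⟨u, hu⟩ := hne₁ v
    exact (hne₂ u).mono (Set.subset_biUnion_of_mem (u := B₂) hu)
  · refine Set.disjoint_iUnion₂_left.mpr fun u hu =>
      Set.disjoint_iUnion₂_right.mpr fun u' hu' => ?_
    exact hdisj₂ fun huu' => Set.disjoint_left.mp (hdisj₁ hvv') hu (huu' ▸ hu')
  · obtain ⟨u, hu, u', hu', huu'⟩ := hadj₁ v v' hvv'
    obtain ⟨p, hp, q, hq, hpq⟩ := hadj₂ u u' huu'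
    exact ⟨p, Set.mem_biUnion hu hp, q, Set.mem_biUnion hu' hq, hpq⟩

lemma IsMinor.of_subgraph {M : X.Subgraph} (h : IsMinor G M.coe) : IsMinor G X :=
  h.trans (isMinor_of_injective M.hom Subgraph.hom_injective)

lemma IsModel.induce {B : V → Set W} (h : IsModel H X B) (s : Set V) :
    IsModel (H.induce s) X (fun v => B v) :=
  ⟨fun v => h.1 v, fun v => h.2.1 v, fun _ _ huv => h.2.2.1 (Subtype.coe_ne_coe.mpr huv),
    fun u v huv => h.2.2.2 u v huv⟩

lemma IsModel.comap (f : G ↪g X) {B : V → Set W} (h : IsModel H X B)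
    (hB : ∀ v, B v ⊆ Set.range f) :
    IsModel H G (fun v => f ⁻¹' B v) := by
  obtain ⟨hne, hconn, hdisj, hadj⟩ := h
  refine ⟨fun v => ?_, fun v => ?_, fun u v huv => (hdisj huv).preimage f, fun u v huv => ?_⟩
  · obtain ⟨w, hw⟩ := hne v
    obtain ⟨x, rfl⟩ := hB v hw
    exact ⟨x, hw⟩
  · let e : G.induce (f ⁻¹' B v) ≃g X.induce (B v) :=
      { Equiv.ofBijective (Set.MapsTo.restrict f _ _ fun _ hx => hx)
          ⟨(Set.MapsTo.restrict_inj _).mpr f.injective.injOn, fun ⟨w, hw⟩ => by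
            obtain ⟨x, rfl⟩ := hB v hw
            exact ⟨⟨x, hw⟩, rfl⟩⟩ with
        map_rel_iff' := f.map_adj_iff }
    exact e.connected_iff.mpr (hconn v)
  · obtain ⟨p, hp, q, hq, hpq⟩ := hadj u v huv
    obtain ⟨x, rfl⟩ := hB u hp
    obtain ⟨y, rfl⟩ := hB v hq
    exact ⟨x, hp, y, hq, f.map_adj_iff.mp hpq⟩

end Minors

section Degree

variable {U V W : Type} {G : SimpleGraph U} {H : SimpleGraph V} {X : SimpleGraph W}

lemma ncard_neighborSet_induce_of_subset {s : Set V} {v : V} (hv : v ∈ s)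
    (h : H.neighborSet v ⊆ s) :
    ((H.induce s).neighborSet ⟨v, hv⟩).ncard = (H.neighborSet v).ncard := by
  rw [← Set.ncard_image_of_injective _ Subtype.val_injective]
  congr 1
  ext u
  exact ⟨fun ⟨_, hu, hval⟩ => hval ▸ hu, fun hu => ⟨⟨u, h hu⟩, hu, rfl⟩⟩

variable [Finite W]

lemma ncard_neighborSet_le_of_injective (f : G →g X) (hf : Function.Injective f) (u : U) :
    (G.neighborSet u).ncard ≤ (X.neighborSet (f u)).ncard :=
  Set.ncard_le_ncard_of_injOn f (fun _ h => f.map_adj h) hf.injOn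

lemma exists_three_le_ncard_neighborSet_of_connected {B₀ T : Set W}
    (hB₀ : (X.induce B₀).Connected) (hT : 3 ≤ T.ncard) (hTB₀ : Disjoint T B₀)
    (hTadj : ∀ t ∈ T, ∃ z ∈ B₀, X.Adj z t) :
    ∃ z ∈ B₀, 3 ≤ (X.neighborSet z).ncard := by
  classical
  have := Fintype.ofFinite B₀
  -- If all degrees were at most 2, the degrees over `B₀` would sum to at most `2 |B₀|`, yet a
  -- spanning tree of `B₀` contributes `2 (|B₀| - 1)` and the edges to `T` at least 3 more.
  by_contra! hdeg
  set K := X.induce B₀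
  have hvert (z : B₀) : (K.neighborSet z).ncard + (X.neighborSet z ∩ T).ncard ≤ 2 := by
    have hdisj : Disjoint (Subtype.val '' K.neighborSet z) (X.neighborSet z ∩ T) :=
      Set.disjoint_left.mpr fun _ ⟨y, _, hy⟩ hyT =>
        Set.disjoint_left.mp hTB₀ hyT.2 (hy ▸ y.2)
    have hsub : Subtype.val '' K.neighborSet z ∪ (X.neighborSet z ∩ T) ⊆ X.neighborSet z :=
      Set.union_subset (Set.image_subset_iff.mpr fun _ hy => hy) Set.inter_subset_left
    have := Set.ncard_le_ncard hsub
    rw [Set.ncard_union_eq hdisj, Set.ncard_image_of_injective _ Subtype.val_injective] at this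
    have := hdeg z z.2
    omega
  have hedges : 2 * Nat.card B₀ ≤ ∑ z : B₀, (K.neighborSet z).ncard + 2 := by
    have := hB₀.card_vert_le_card_edgeSet_add_one
    simp only [← Nat.card_coe_set_eq, Nat.card_eq_fintype_card, card_neighborSet_eq_degree,
      sum_degrees_eq_twice_card_edges, edgeFinset_card] at this ⊢
    omega
  have hattach : T.ncard ≤ ∑ z : B₀, (X.neighborSet z ∩ T).ncard := by
    refine (Set.ncard_le_ncard fun t ht => ?_).trans (Set.ncard_iUnion_le_of_fintype _)
    obtain ⟨z, hz, hzt⟩ := hTadj t ht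
    exact Set.mem_iUnion.mpr ⟨⟨z, hz⟩, hzt, ht⟩
  have hsum : ∑ z : B₀, ((K.neighborSet z).ncard + (X.neighborSet z ∩ T).ncard)
      ≤ 2 * Nat.card B₀ := by
    calc _ ≤ ∑ _z : B₀, 2 := Finset.sum_le_sum fun z _ => hvert z
      _ = 2 * Nat.card B₀ := by simp [Nat.card_eq_fintype_card, mul_comm]
  rw [Finset.sum_add_distrib] at hsum
  omega

lemma IsModel.exists_three_le_ncard_neighborSet {B : V → Set W} (h : IsModel H X B) {v : V}
    (hv : 3 ≤ (H.neighborSet v).ncard) : ∃ w ∈ B v, 3 ≤ (X.neighborSet w).ncard := by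
  obtain ⟨hne, hconn, hdisj, hadj⟩ := h
  have : Nonempty W := (hne v).to_subtype.map Subtype.val
  choose! z hz x hx hzx using fun u (hu : u ∈ H.neighborSet v) => hadj v u hu
  refine exists_three_le_ncard_neighborSet_of_connected (hconn v) (T := x '' H.neighborSet v)
    ?_ ?_ ?_
  · have hinj : Set.InjOn x (H.neighborSet v) := fun u hu u' hu' hxu => by_contra fun hne =>
      Set.disjoint_left.mp (hdisj hne) (hx u hu) (hxu ▸ hx u' hu')
    rwa [hinj.ncard_image]
  · refine Set.disjoint_left.mpr ?_
    rintro _ ⟨u, hu, rfl⟩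
    exact Set.disjoint_left.mp (hdisj (H.ne_of_adj hu).symm) (hx u hu)
  · rintro _ ⟨u, hu, rfl⟩
    exact ⟨z u, hz u hu, hzx u hu⟩

end Degree

lemma SimpleGraph.Walk.IsPath.ncard_neighborSet_toSubgraph_le_two {V : Type} {G : SimpleGraph V}
    {u v : V} {p : G.Walk u v} (hp : p.IsPath) (w : V) :
    (p.toSubgraph.neighborSet w).ncard ≤ 2 := by
  by_cases hw : w ∈ p.support
  · obtain ⟨i, rfl, hi⟩ := Walk.mem_support_iff_exists_getVert.mp hw
    have hsub : p.toSubgraph.neighborSet (p.getVert i) ⊆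
        {p.getVert (i - 1), p.getVert (i + 1)} := by
      intro y hy
      obtain ⟨j, hj, hjl⟩ := (p.toSubgraph_adj_iff).mp hy
      have inj := hp.getVert_injOn
      rcases Sym2.eq_iff.mp hj with ⟨h1, rfl⟩ | ⟨rfl, h1⟩
      · obtain rfl : j = i := inj (show j ≤ p.length by omega) (show i ≤ p.length from hi) h1
        exact Or.inr rfl
      · obtain rfl : j + 1 = i :=
          inj (show j + 1 ≤ p.length from hjl) (show i ≤ p.length from hi) h1
        exact Or.inl rfl
    exact (Set.ncard_le_ncard hsub (Set.toFinite _)).trans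
      ((Set.ncard_insert_le _ _).trans (by simp))
  · rw [show p.toSubgraph.neighborSet w = ∅ from Set.eq_empty_of_forall_notMem fun _ hy =>
      hw (Walk.mem_support_of_adj_toSubgraph hy)]
    simp

lemma IsGTimes.exists_copy_of_branch {V W : Type} {H : SimpleGraph V} {G : H.Subgraph} {r : ℕ}
    {GX : SimpleGraph W} (h : IsGTimes H G r GX) :
    ∃ φ : V → W, ∀ x, 3 ≤ (GX.neighborSet x).ncard →
      ∃ v ∈ G.verts, 3 ≤ (H.neighborSet v).ncard ∧ x = φ v := by
  obtain ⟨φ, ι, pend, a, b, P, c, Q, -, -, hends, hnonpend, -, -, -, -, hQ, -, -, hsame, hdiff,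
    -, -, hcover, hedges⟩ := h
  refine ⟨φ, fun x hx => ?_⟩
  by_contra hcopy
  obtain hbranch | ⟨i, j, hxQ⟩ := hcover x
  · exact hcopy hbranch
  have hsub : GX.neighborSet x ⊆ (Q i j).toSubgraph.neighborSet x := by
    intro y hy
    obtain ⟨i', j', hxy⟩ := (hedges s(x, y)).mp hy
    have hxQ' : x ∈ (Q i' j').support := Walk.fst_mem_support_of_mem_edges _ hxy
    obtain rfl : i' = i := by_contra fun hi => hcopy (hdiff i' j' i j hi x hxQ' hxQ)
    obtain rfl : j' = j := by
      by_contra hj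
      rcases hsame i' j' j hj x hxQ' hxQ with ⟨hnp, rfl | rfl⟩ | ⟨-, rfl⟩
      · exact hcopy ⟨a i', (hends i').1, (hnonpend i' hnp).1, rfl⟩
      all_goals exact hcopy ⟨b i', (hends i').2.1, (hends i').2.2, rfl⟩
    exact Walk.adj_toSubgraph_iff_mem_edges.mpr hxy
  have := (Set.ncard_le_ncard hsub (Walk.finite_neighborSet_toSubgraph _)).trans
    ((hQ i j).ncard_neighborSet_toSubgraph_le_two x)
  omega

section DisjUnion

variable {I V : Type} {U : I → Type} {F : ∀ i, SimpleGraph (U i)} {H : SimpleGraph V}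

lemma disjUnion_adj_fst_eq {x y : Σ i, U i} (h : (disjUnion F).Adj x y) : x.1 = y.1 := by
  obtain ⟨i, a, b, -, rfl, rfl⟩ := h
  rfl

def restrictPartEmbedding (F : ∀ i, SimpleGraph (U i)) (S : (disjUnion F).Subgraph) (i : I) :
    (restrictPart F S i).coe ↪g S.coe where
  toFun x := ⟨⟨i, x.1⟩, x.2⟩
  inj' _ _ h := Subtype.ext (sigma_mk_injective (congrArg Subtype.val h))
  map_rel_iff' := Iff.rfl

lemma mem_range_restrictPartEmbedding {S : (disjUnion F).Subgraph} {i : I} {w : S.verts} :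
    w ∈ Set.range (restrictPartEmbedding F S i) ↔ w.1.1 = i := by
  refine ⟨?_, fun h => ?_⟩
  · rintro ⟨x, rfl⟩
    rfl
  · obtain ⟨⟨j, x⟩, hx⟩ := w
    subst h
    exact ⟨⟨x, hx⟩, rfl⟩

lemma restrictPart_edgeSet (S : (disjUnion F).Subgraph) (i : I) :
    (restrictPart F S i).edgeSet = Sym2.map (Sigma.mk i) ⁻¹' S.edgeSet := by
  ext e
  induction e
  rfl

lemma Disjoint.restrictPart_edgeSet {S S' : (disjUnion F).Subgraph}
    (h : Disjoint S.edgeSet S'.edgeSet) (i : I) :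
    Disjoint (restrictPart F S i).edgeSet (restrictPart F S' i).edgeSet := by
  rw [_root_.restrictPart_edgeSet, _root_.restrictPart_edgeSet]
  exact h.preimage _

variable {S : (disjUnion F).Subgraph} {B : V → Set S.verts}

lemma IsModel.exists_summand (h : IsModel H S.coe B) :
    ∃ idx : V → I, (∀ v, ∀ w ∈ B v, w.1.1 = idx v) ∧
      ∀ u v, H.Reachable u v → idx u = idx v := by
  choose w₀ hw₀ using h.1
  have hbranch (v : V) (w) (hw : w ∈ B v) : w.1.1 = (w₀ v).1.1 :=
    ((h.2.1 v).preconnected ⟨w, hw⟩ ⟨w₀ v, hw₀ v⟩).apply_eq_of_forall_adj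
      (f := fun x : B v => x.1.1.1) fun _ _ hxy => disjUnion_adj_fst_eq (S.adj_sub hxy)
  refine ⟨fun v => (w₀ v).1.1, hbranch, fun u v huv =>
    huv.apply_eq_of_forall_adj (f := fun v => (w₀ v).1.1) fun u v huv => ?_⟩
  obtain ⟨p, hp, q, hq, hpq⟩ := h.2.2.2 u v huv
  rw [← hbranch u p hp, ← hbranch v q hq]
  exact disjUnion_adj_fst_eq (S.adj_sub hpq)

lemma IsModel.isMinor_restrictPart (h : IsModel H S.coe B) {s : Set V} {i : I}
    (hs : ∀ v ∈ s, ∀ w ∈ B v, w.1.1 = i) : IsMinor (H.induce s) (restrictPart F S i).coe :=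
  ⟨_, (h.induce s).comap (restrictPartEmbedding F S i) fun v w hw =>
    mem_range_restrictPartEmbedding.mpr (hs v v.2 w hw)⟩

lemma IsModel.exists_three_le_ncard_neighborSet_summand {i : I} [Finite (U i)]
    (h : IsModel H S.coe B) {v : V} (hv : 3 ≤ (H.neighborSet v).ncard)
    (hs : ∀ u ∈ insert v (H.neighborSet v), ∀ w ∈ B u, w.1.1 = i) :
    ∃ x : U i, ∃ hx : ⟨i, x⟩ ∈ S.verts,
      ⟨⟨i, x⟩, hx⟩ ∈ B v ∧ 3 ≤ ((F i).neighborSet x).ncard := by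
  have hmodel := (h.induce _).comap (restrictPartEmbedding F S i) fun u w hw =>
    mem_range_restrictPartEmbedding.mpr (hs u u.2 w hw)
  obtain ⟨⟨x, hx⟩, hxB, hdeg⟩ := hmodel.exists_three_le_ncard_neighborSet
    (v := ⟨v, Set.mem_insert _ _⟩)
    (by rwa [ncard_neighborSet_induce_of_subset _ (Set.subset_insert _ _)])
  exact ⟨x, hx, hxB, hdeg.trans
    (ncard_neighborSet_le_of_injective (restrictPart F S i).hom Subgraph.hom_injective _)⟩

end DisjUnion

section StarGraph

variable {V : Type} {H : SimpleGraph V} {A : H.ConnectedComponent} {r : ℕ} {WA : Type}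
  {Astar : SimpleGraph WA} {WC : CsetT H A → Type} {CX : ∀ c, SimpleGraph (WC c)}
  {S : (disjUnion (fam H A r Astar CX)).Subgraph} {B : V → Set S.verts}

lemma IsModel.exists_copy_mem_of_summand_eq [∀ c, Finite (WC c)] {φ : ∀ c, V → WC c}
    (hφ : ∀ c x, 3 ≤ ((CX c).neighborSet x).ncard →
      ∃ v ∈ c.1.supp, 3 ≤ (H.neighborSet v).ncard ∧ x = φ c v)
    (hB : IsModel H S.coe B) {idx : V → Unit ⊕ (BsetT H A × Fin r) ⊕ CsetT H A}
    (hidx : ∀ v, ∀ w ∈ B v, w.1.1 = idx v)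
    (hreach : ∀ u v, H.Reachable u v → idx u = idx v)
    {v : V} (hv : 3 ≤ (H.neighborSet v).ncard) {c : CsetT H A}
    (hc : idx v = Sum.inr (Sum.inr c)) :
    ∃ v' ∈ c.1.supp, 3 ≤ (H.neighborSet v').ncard ∧
      ∃ w ∈ B v, w.1 = ⟨Sum.inr (Sum.inr c), φ c v'⟩ := by
  have : Finite (famV H A r WA WC (Sum.inr (Sum.inr c))) := inferInstanceAs (Finite (WC c))
  obtain ⟨x, hx, hxB, hdeg⟩ := hB.exists_three_le_ncard_neighborSet_summand
      (i := Sum.inr (Sum.inr c)) hv fun u hu w hw => by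
    rw [hidx u w hw, ← hc]
    rcases hu with rfl | hu
    · rfl
    · exact (hreach _ _ hu.reachable).symm
  obtain ⟨v', hv', hdeg', rfl⟩ := hφ c x hdeg
  exact ⟨v', hv', hdeg', _, hxB, rfl⟩

lemma IsModel.exists_isMinor_component_summand_ne_inr_inr [Finite V] [∀ c, Finite (WC c)]
    (hA3 : ∃ v ∈ A.supp, 3 ≤ (H.neighborSet v).ncard)
    (hCX : ∀ c : CsetT H A, IsGTimes H ((⊤ : H.Subgraph).induce c.1.supp) r (CX c))
    (hB : IsModel H S.coe B) {idx : V → Unit ⊕ (BsetT H A × Fin r) ⊕ CsetT H A}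
    (hidx : ∀ v, ∀ w ∈ B v, w.1.1 = idx v)
    (hreach : ∀ u v, H.Reachable u v → idx u = idx v) :
    ∃ v, IsMinor (compGraph H A) (compGraph H (H.connectedComponentMk v)) ∧
      ∀ c, idx v ≠ Sum.inr (Sum.inr c) := by
  by_contra! hC
  choose φ hφ using fun c => (hCX c).exists_copy_of_branch
  set L := {v | 3 ≤ (H.neighborSet v).ncard ∧
    IsMinor (compGraph H A) (compGraph H (H.connectedComponentMk v))}
  set R := {v ∈ L | H.connectedComponentMk v ≠ A}
  have hcopy (v : L) : ∃ v' : R, ∃ c : CsetT H A, v'.1 ∈ c.1.supp ∧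
      ∃ w ∈ B v, w.1 = ⟨Sum.inr (Sum.inr c), φ c v'⟩ := by
    obtain ⟨c, hc⟩ := hC v v.2.2
    obtain ⟨v', hv', hdeg, w, hwB, hw⟩ :=
      hB.exists_copy_mem_of_summand_eq hφ hidx hreach v.2.1 hc
    have hv'c : H.connectedComponentMk v' = c.1 := hv'
    exact ⟨⟨v', ⟨hdeg, hv'c ▸ c.2.2⟩, hv'c ▸ c.2.1⟩, c, hv', w, hwB, hw⟩
  choose Φ c hc w hwB hw using hcopy
  have hinj : Function.Injective Φ := by
    intro v₁ v₂ he
    have hc₁₂ : c v₁ = c v₂ := Subtype.ext ((hc v₁).symm.trans (he ▸ hc v₂ :))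
    have hw₁₂ : w v₁ = w v₂ := Subtype.ext ((hw v₁).trans (by rw [hc₁₂, he, hw v₂]))
    by_contra hne
    exact Set.disjoint_left.mp (hB.2.2.1 (Subtype.coe_ne_coe.mpr hne)) (hwB v₁)
      (hw₁₂ ▸ hwB v₂)
  obtain ⟨v₀, hv₀A : H.connectedComponentMk v₀ = A, hv₀⟩ := hA3
  have hRL : R ⊂ L := Set.ssubset_iff_of_subset (fun _ hv => hv.1) |>.mpr
    ⟨v₀, ⟨hv₀, hv₀A ▸ isMinor_refl _⟩, fun hv => hv.2 hv₀A⟩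
  have hLR := Nat.card_le_card_of_injective Φ hinj
  rw [Nat.card_coe_set_eq, Nat.card_coe_set_eq] at hLR
  exact (Set.ncard_lt_ncard hRL).not_ge hLR

lemma isMinor_restrictPart_inl [Finite V] [∀ c, Finite (WC c)]
    (hA3 : ∃ v ∈ A.supp, 3 ≤ (H.neighborSet v).ncard)
    (hCX : ∀ c : CsetT H A, IsGTimes H ((⊤ : H.Subgraph).induce c.1.supp) r (CX c))
    (hS : IsMinor H S.coe) :
    IsMinor (compGraph H A) (restrictPart (fam H A r Astar CX) S (Sum.inl ())).coe := by
  obtain ⟨B, hB⟩ := hS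
  obtain ⟨idx, hidx, hreach⟩ := hB.exists_summand
  obtain ⟨v, hAv, hv⟩ := hB.exists_isMinor_component_summand_ne_inr_inr hA3 hCX hidx hreach
  have hcomp : IsMinor (compGraph H (H.connectedComponentMk v))
      (restrictPart (fam H A r Astar CX) S (idx v)).coe :=
    hB.isMinor_restrictPart fun u hu w hw =>
      (hidx u w hw).trans (hreach u v (ConnectedComponent.exact hu))
  rcases hi : idx v with ⟨⟩ | p | c
  · exact hAv.trans (hi ▸ hcomp)
  · exact absurd (hAv.trans (hi ▸ hcomp).of_subgraph) p.1.2
  · exact absurd hi (hv c)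

end StarGraph

theorem minor_in_Astar_of_model_general {V : Type} [Fintype V] (H : SimpleGraph V)
    (A : H.ConnectedComponent) (hA3 : ∃ v ∈ A.supp, 3 ≤ (H.neighborSet v).ncard)
    (r : ℕ)
    {WA : Type} (Astar : SimpleGraph WA)
    {WC : CsetT H A → Type} [∀ c, Fintype (WC c)] (CX : ∀ c, SimpleGraph (WC c))
    (hCX : ∀ c : CsetT H A, IsGTimes H ((⊤ : H.Subgraph).induce c.1.supp) r (CX c)) :
    (∀ S : (disjUnion (fam H A r Astar CX)).Subgraph, IsMinor H S.coe →
      IsMinor (compGraph H A) (restrictPart (fam H A r Astar CX) S (Sum.inl ())).coe) ∧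
    (∀ k : ℕ, EdgeDisjointExpansions H (disjUnion (fam H A r Astar CX)) k →
      EdgeDisjointExpansions (compGraph H A) Astar k) := by
  refine ⟨fun S hS => isMinor_restrictPart_inl hA3 hCX hS, fun k ⟨M, hdisj, hM⟩ =>
    ⟨fun i => restrictPart _ (M i) (Sum.inl ()),
      fun i j hij => (hdisj hij).restrictPart_edgeSet _,
      fun i => isMinor_restrictPart_inl hA3 hCX (hM i)⟩⟩

/-- Let `A` be a component of `H` containing a vertex of degree at
least 3, let `𝓑` and `𝓒` be as above, let `r ≥ 3`, let `A*` be any graph, and let `H*`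
be the disjoint union of `A*`, of `r` copies of each `B ∈ 𝓑`, and of `C^×` for each
`C ∈ 𝓒`. Then for every subgraph of `H*` that is a model of `H`, its part in `A*`
contains `A` as a minor; in particular, `k` edge-disjoint models of `H` in `H*` yield
`k` edge-disjoint models of `A` in `A*`. -/
theorem minor_in_Astar_of_model {V : Type} [Fintype V] (H : SimpleGraph V)
    (A : H.ConnectedComponent) (hA3 : ∃ v ∈ A.supp, 3 ≤ (H.neighborSet v).ncard)
    (r : ℕ) (hr : 3 ≤ r)
    {WA : Type} [Fintype WA] (Astar : SimpleGraph WA)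
    {WC : CsetT H A → Type} [∀ c, Fintype (WC c)] (CX : ∀ c, SimpleGraph (WC c))
    (hCX : ∀ c : CsetT H A, IsGTimes H ((⊤ : H.Subgraph).induce c.1.supp) r (CX c)) :
    (∀ S : (disjUnion (fam H A r Astar CX)).Subgraph, IsMinor H S.coe →
      IsMinor (compGraph H A) (restrictPart (fam H A r Astar CX) S (Sum.inl ())).coe) ∧
    (∀ k : ℕ, EdgeDisjointExpansions H (disjUnion (fam H A r Astar CX)) k →
      EdgeDisjointExpansions (compGraph H A) Astar k) :=
  minor_in_Astar_of_model_general H A hA3 r Astar CX hCX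
end
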